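/- Let ω(x) = c_S |x|⁻⁴ (1 + a (r/|x|)^ξ)⁻² for |x| ≥ r, where c_S = 3⁴ 2⁻³ π², ξ = (−7 + √73)/2, r > 0, and a > −1. Then ω satisfies the differential inequality Δω(x) ≥ 4π c_TF^{−3/2} ω(x)^{3/2} for all |x| > r, where c_TF = 2⁻¹ (3π²)^{2/3}. -/

import Mathlib

/-!
Write `t = |x|²`, `γ = -ξ/2` and `u = a r^ξ t^γ = a (r/|x|)^ξ`. Then `ω = c_S P(t)` with
`P(t) = (t² (1 + u)²)⁻¹`, and in `ℝ³` a function of `|x|²` has Laplacian `6 P' + 4 t P''`.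
A direct computation gives
`6 P' + 4 t P'' = (12 (1+u)² + 4γ(7 - 2γ) u (1+u) + 24 γ² u²) / (t³ (1+u)⁴)`, and `ξ (ξ + 7) = 6`
makes the middle coefficient `-12`, so `6 P' + 4 t P'' = 12 P^{3/2} + 6 ξ² u² / (t³ (1+u)⁴)`.
Since `4π c_TF^{-3/2} c_S^{3/2} = 12 c_S`, this is the claim; `1 + u > 0` because `a > -1` and
`0 < (r/|x|)^ξ ≤ 1`.
-/

open Real Finset

noncomputable abbrev E3 := EuclideanSpace ℝ (Fin 3)

noncomputable def e3 (i : Fin 3) : E3 := EuclideanSpace.basisFun (Fin 3) ℝ i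

/-- The Laplacian of `f : ℝ³ → ℝ`. -/
noncomputable def laplacianE3 (f : E3 → ℝ) (x : E3) : ℝ :=
  ∑ i, iteratedFDeriv ℝ 2 f x ![e3 i, e3 i]

/-- The Sommerfeld constant `c_S = 3⁴ 2⁻³ π²`. -/
noncomputable def cS : ℝ := 3 ^ 4 * 2⁻¹ ^ 3 * π ^ 2

/-- The Thomas–Fermi constant `c_TF = 2⁻¹ (3π²)^{2/3}`. -/
noncomputable def cTF : ℝ := 2⁻¹ * (3 * π ^ 2) ^ ((2 : ℝ) / 3)

/-- The exponent `ξ = (−7 + √73)/2`. -/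
noncomputable def ξ : ℝ := (-7 + Real.sqrt 73) / 2

open Filter Topology InnerProductSpace Laplacian
open scoped RealInnerProductSpace

section RadialLaplacian

variable {E : Type*} [NormedAddCommGroup E] [InnerProductSpace ℝ E]
  {f : E → ℝ} {F F' : ℝ → ℝ} {F'' : ℝ} {x : E}

theorem iteratedFDeriv_two_apply_of_eventuallyEq_comp_norm_sq
    (hf : f =ᶠ[𝓝 x] fun y => F (‖y‖ ^ 2))
    (hF : ∀ᶠ y in 𝓝 x, HasDerivAt F (F' (‖y‖ ^ 2)) (‖y‖ ^ 2))
    (hF' : HasDerivAt F' F'' (‖x‖ ^ 2)) (v : E) :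
    iteratedFDeriv ℝ 2 f x ![v, v] = 2 * F' (‖x‖ ^ 2) * ‖v‖ ^ 2 + 4 * F'' * ⟪x, v⟫ ^ 2 := by
  have hD : ∀ y : E, HasFDerivAt (fun y : E => ‖y‖ ^ 2) (2 • innerSL ℝ y) y := fun y =>
    (hasStrictFDerivAt_norm_sq y).hasFDerivAt
  have hfderiv : fderiv ℝ f =ᶠ[𝓝 x] fun y => F' (‖y‖ ^ 2) • (2 • innerSL ℝ y) := by
    filter_upwards [hf.eventuallyEq_nhds, hF] with y hfy hFy
    exact ((hFy.comp_hasFDerivAt y (hD y)).congr_of_eventuallyEq hfy).fderiv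
  have hfderiv2 : HasFDerivAt (fderiv ℝ f)
      (F' (‖x‖ ^ 2) • (2 • innerSL ℝ) + (F'' • 2 • innerSL ℝ x).smulRight (2 • innerSL ℝ x)) x :=
    ((hF'.comp_hasFDerivAt x (hD x)).smul
      (2 • innerSL ℝ (E := E)).hasFDerivAt).congr_of_eventuallyEq hfderiv
  rw [iteratedFDeriv_two_apply, hfderiv2.fderiv]
  simp only [Matrix.cons_val_zero, Matrix.cons_val_one, Matrix.cons_val_fin_one, add_apply,
    smul_apply, ContinuousLinearMap.smulRight_apply, innerSL_apply_apply, smul_eq_mul, nsmul_eq_mul]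
  rw [innerSL_apply_apply, real_inner_self_eq_norm_sq]
  ring

theorem laplacian_of_eventuallyEq_comp_norm_sq [FiniteDimensional ℝ E]
    (hf : f =ᶠ[𝓝 x] fun y => F (‖y‖ ^ 2))
    (hF : ∀ᶠ y in 𝓝 x, HasDerivAt F (F' (‖y‖ ^ 2)) (‖y‖ ^ 2))
    (hF' : HasDerivAt F' F'' (‖x‖ ^ 2)) :
    Δ f x = 2 * Module.finrank ℝ E * F' (‖x‖ ^ 2) + 4 * ‖x‖ ^ 2 * F'' := by
  set b := stdOrthonormalBasis ℝ E
  rw [laplacian_eq_iteratedFDeriv_orthonormalBasis f b]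
  simp only [iteratedFDeriv_two_apply_of_eventuallyEq_comp_norm_sq hf hF hF', b.orthonormal.1,
    Finset.sum_add_distrib, ← Finset.mul_sum, b.sum_sq_inner_left, one_pow, mul_one,
    Finset.sum_const, Finset.card_univ, Fintype.card_fin, nsmul_eq_mul]
  ring

end RadialLaplacian

theorem laplacianE3_eq_laplacian (f : E3 → ℝ) : laplacianE3 f = Δ f := by
  rw [laplacian_eq_iteratedFDeriv_orthonormalBasis f (EuclideanSpace.basisFun (Fin 3) ℝ)]
  rfl

theorem hasDerivAt_mul_rpow (b γ : ℝ) {t : ℝ} (ht : 0 < t) :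
    HasDerivAt (fun s => b * s ^ γ) (γ * (b * t ^ γ) / t) t := by
  refine ((Real.hasDerivAt_rpow_const (p := γ) (Or.inl ht.ne')).const_mul b).congr_deriv ?_
  rw [Real.rpow_sub_one ht.ne']
  ring

noncomputable def sommerfeldProfile (b γ t : ℝ) : ℝ := (t ^ 2 * (1 + b * t ^ γ) ^ 2)⁻¹

noncomputable def sommerfeldProfileDeriv (b γ t : ℝ) : ℝ :=
  -2 * (1 + (1 + γ) * (b * t ^ γ)) / (t ^ 3 * (1 + b * t ^ γ) ^ 3)

noncomputable def sommerfeldProfileDeriv2 (b γ t : ℝ) : ℝ :=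
  (6 * (1 + b * t ^ γ) ^ 2 + (10 * γ - 2 * γ ^ 2) * (b * t ^ γ) * (1 + b * t ^ γ)
      + 6 * γ ^ 2 * (b * t ^ γ) ^ 2) / (t ^ 4 * (1 + b * t ^ γ) ^ 4)

section SommerfeldProfile

variable {b γ t : ℝ}

theorem hasDerivAt_sommerfeldProfile (ht : 0 < t) (hw : 1 + b * t ^ γ ≠ 0) :
    HasDerivAt (sommerfeldProfile b γ) (sommerfeldProfileDeriv b γ t) t := by
  have h := ((hasDerivAt_pow 2 t).mul (((hasDerivAt_mul_rpow b γ ht).const_add 1).pow 2)).inv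
    (mul_ne_zero (pow_ne_zero 2 ht.ne') (pow_ne_zero 2 hw))
  refine h.congr_deriv ?_
  unfold sommerfeldProfileDeriv
  simp only [Pi.mul_apply, Pi.pow_apply]
  field_simp
  ring

theorem hasDerivAt_sommerfeldProfileDeriv (ht : 0 < t) (hw : 1 + b * t ^ γ ≠ 0) :
    HasDerivAt (sommerfeldProfileDeriv b γ) (sommerfeldProfileDeriv2 b γ t) t := by
  have hu := hasDerivAt_mul_rpow b γ ht
  have h := (((hu.const_mul (1 + γ)).const_add 1).const_mul (-2)).div
    ((hasDerivAt_pow 3 t).mul ((hu.const_add 1).pow 3))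
    (mul_ne_zero (pow_ne_zero 3 ht.ne') (pow_ne_zero 3 hw))
  refine h.congr_deriv ?_
  unfold sommerfeldProfileDeriv2
  simp only [Pi.mul_apply, Pi.pow_apply]
  field_simp
  ring

theorem six_mul_sommerfeldProfileDeriv_add (ht : t ≠ 0) (hw : 1 + b * t ^ γ ≠ 0) :
    6 * sommerfeldProfileDeriv b γ t + 4 * t * sommerfeldProfileDeriv2 b γ t =
      (12 * (1 + b * t ^ γ) ^ 2 + 4 * γ * (7 - 2 * γ) * (b * t ^ γ) * (1 + b * t ^ γ)
        + 24 * γ ^ 2 * (b * t ^ γ) ^ 2) / (t ^ 3 * (1 + b * t ^ γ) ^ 4) := by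
  unfold sommerfeldProfileDeriv sommerfeldProfileDeriv2
  generalize b * t ^ γ = u at *
  field_simp
  ring

theorem rpow_three_halves_of_sq {y : ℝ} (hy : 0 ≤ y) : (y ^ 2) ^ (3 / 2 : ℝ) = y ^ 3 := by
  rw [← Real.rpow_natCast, ← Real.rpow_mul hy]
  norm_num

theorem sommerfeldProfile_rpow_three_halves (ht : 0 < t) (hw : 0 < 1 + b * t ^ γ) :
    sommerfeldProfile b γ t ^ (3 / 2 : ℝ) = (t ^ 3 * (1 + b * t ^ γ) ^ 3)⁻¹ := by
  rw [sommerfeldProfile, ← mul_pow, Real.inv_rpow (by positivity),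
    rpow_three_halves_of_sq (by positivity), mul_pow]

end SommerfeldProfile

theorem ξ_sq_add : ξ ^ 2 + 7 * ξ = 6 := by
  have h := Real.sq_sqrt (show (0 : ℝ) ≤ 73 by norm_num)
  unfold ξ
  linear_combination h / 4

theorem ξ_pos : 0 < ξ := by
  have : (8 : ℝ) ≤ √73 := Real.le_sqrt_of_sq_le (by norm_num)
  unfold ξ
  linarith

theorem twelve_mul_sommerfeldProfile_rpow_le {b t : ℝ} (ht : 0 < t)
    (hw : 0 < 1 + b * t ^ (-ξ / 2)) :
    12 * sommerfeldProfile b (-ξ / 2) t ^ (3 / 2 : ℝ) ≤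
      6 * sommerfeldProfileDeriv b (-ξ / 2) t + 4 * t * sommerfeldProfileDeriv2 b (-ξ / 2) t := by
  rw [sommerfeldProfile_rpow_three_halves ht hw, six_mul_sommerfeldProfileDeriv_add ht.ne' hw.ne']
  generalize b * t ^ (-ξ / 2) = u at *
  have hξ : 4 * (-ξ / 2) * (7 - 2 * (-ξ / 2)) = -12 := by linear_combination -2 * ξ_sq_add
  have hsplit : (12 * (1 + u) ^ 2 + -12 * u * (1 + u) + 24 * (-ξ / 2) ^ 2 * u ^ 2)
        / (t ^ 3 * (1 + u) ^ 4)
      = 12 * (t ^ 3 * (1 + u) ^ 3)⁻¹ + 6 * ξ ^ 2 * u ^ 2 / (t ^ 3 * (1 + u) ^ 4) := by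
    field_simp
    ring
  rw [hξ, hsplit, le_add_iff_nonneg_right]
  positivity

theorem four_mul_pi_mul_cTF_rpow_mul_cS_rpow :
    4 * π * cTF ^ (-(3 : ℝ) / 2) * cS ^ ((3 : ℝ) / 2) = 12 * cS := by
  have h3π : 0 ≤ 3 * π ^ 2 := by positivity
  set c := (3 * π ^ 2) ^ ((1 : ℝ) / 3)
  have hc : c ^ 3 = 3 * π ^ 2 := by
    rw [← Real.rpow_natCast, ← Real.rpow_mul h3π]
    norm_num
  have hTF : cTF = (c / √2) ^ 2 := by
    rw [div_pow, Real.sq_sqrt zero_le_two, ← Real.rpow_natCast, ← Real.rpow_mul h3π, cTF]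
    norm_num
    ring
  have hS : cS = (9 * π / (2 * √2)) ^ 2 := by
    rw [div_pow, mul_pow, mul_pow, Real.sq_sqrt zero_le_two, cS]
    ring
  rw [neg_div, Real.rpow_neg (by rw [hTF]; positivity), hTF, hS,
    rpow_three_halves_of_sq (by positivity), rpow_three_halves_of_sq (by positivity)]
  field_simp
  rw [hc, Real.sq_sqrt zero_le_two]
  field_simp
  norm_num

theorem mul_rpow_mul_sq_rpow_neg_half {r ρ : ℝ} (hr : 0 ≤ r) (hρ : 0 < ρ) (a s : ℝ) :
    a * r ^ s * (ρ ^ 2) ^ (-s / 2) = a * (r / ρ) ^ s := by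
  rw [← Real.rpow_natCast, ← Real.rpow_mul hρ.le, Nat.cast_ofNat, mul_div_cancel₀ _ two_ne_zero,
    Real.rpow_neg hρ.le, Real.div_rpow hr hρ.le, div_eq_mul_inv, mul_assoc]

theorem one_add_mul_rpow_div_pos {a r ρ s : ℝ} (ha : -1 < a) (hr : 0 ≤ r) (hrρ : r ≤ ρ)
    (hs : 0 ≤ s) : 0 < 1 + a * (r / ρ) ^ s := by
  have hq₀ : 0 ≤ (r / ρ) ^ s := Real.rpow_nonneg (div_nonneg hr (hr.trans hrρ)) s
  have hq₁ : (r / ρ) ^ s ≤ 1 :=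
    Real.rpow_le_one (div_nonneg hr (hr.trans hrρ)) (div_le_one_of_le₀ hrρ (hr.trans hrρ)) hs
  rcases le_or_gt 0 a with ha₀ | ha₀
  · nlinarith
  · nlinarith

/-- Subsolution property of the perturbed Sommerfeld function:
`Δω ≥ 4π c_TF^{−3/2} ω^{3/2}` for `|x| > r`, where
`ω(x) = c_S |x|⁻⁴ (1 + a (r/|x|)^ξ)⁻²`. -/
theorem stmt_15 (r a : ℝ) (hr : 0 < r) (ha : -1 < a)
    (ω : E3 → ℝ)
    (hω : ∀ x : E3, r ≤ ‖x‖ →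
      ω x = cS * (‖x‖ ^ 4)⁻¹ * ((1 + a * (r / ‖x‖) ^ ξ) ^ 2)⁻¹) :
    ∀ x : E3, r < ‖x‖ →
      4 * π * cTF ^ (-(3 : ℝ) / 2) * ω x ^ ((3 : ℝ) / 2) ≤ laplacianE3 ω x := by
  intro x hx
  set b := a * r ^ ξ
  have hnear : ∀ᶠ y in 𝓝 x, r < ‖y‖ := (isOpen_lt continuous_const continuous_norm).mem_nhds hx
  have hpos : ∀ {y : E3}, r < ‖y‖ → 0 < ‖y‖ ^ 2 := fun hy => pow_pos (hr.trans hy) 2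
  have hw : ∀ {y : E3}, r < ‖y‖ → 0 < 1 + b * (‖y‖ ^ 2) ^ (-ξ / 2) := fun hy => by
    rw [mul_rpow_mul_sq_rpow_neg_half hr.le (hr.trans hy)]
    exact one_add_mul_rpow_div_pos ha hr.le hy.le ξ_pos.le
  have hωeq : ω =ᶠ[𝓝 x] fun y => cS * sommerfeldProfile b (-ξ / 2) (‖y‖ ^ 2) := by
    filter_upwards [hnear] with y hy
    rw [hω y hy.le, sommerfeldProfile, mul_rpow_mul_sq_rpow_neg_half hr.le (hr.trans hy), mul_inv,
      ← pow_mul]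
    ring
  have hF : ∀ᶠ y in 𝓝 x, HasDerivAt (fun t => cS * sommerfeldProfile b (-ξ / 2) t)
      (cS * sommerfeldProfileDeriv b (-ξ / 2) (‖y‖ ^ 2)) (‖y‖ ^ 2) :=
    hnear.mono fun y hy => (hasDerivAt_sommerfeldProfile (hpos hy) (hw hy).ne').const_mul cS
  have hF' := (hasDerivAt_sommerfeldProfileDeriv (hpos hx) (hw hx).ne').const_mul cS
  have hcS : 0 < cS := by unfold cS; positivity
  have hP : 0 ≤ sommerfeldProfile b (-ξ / 2) (‖x‖ ^ 2) := by unfold sommerfeldProfile; positivity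
  rw [laplacianE3_eq_laplacian, laplacian_of_eventuallyEq_comp_norm_sq hωeq hF hF',
    finrank_euclideanSpace_fin, hωeq.eq_of_nhds, Real.mul_rpow hcS.le hP, ← mul_assoc,
    four_mul_pi_mul_cTF_rpow_mul_cS_rpow]
  have hprofile := mul_le_mul_of_nonneg_left
    (twelve_mul_sommerfeldProfile_rpow_le (hpos hx) (hw hx)) hcS.le
  push_cast
  linarith
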